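/- Let f : [a,b) → ℝ be Φ-uniformly convex with increasing modulus Φ : [0,b−a) → ℝ₊, Φ(0)=0. Let p, q be probability vectors with qᵢ > 0, m = min_i(pᵢ/qᵢ), and suppose x₁ ≤ ... ≤ x_{k−1} ≤ x̄_q ≤ x_k ≤ ... ≤ xₙ where x̄_q = ∑qᵢxᵢ. Then Jₙ(f,x,p) − m·Jₙ(f,x,q) ≥ ∑_{i=1, i≠k−1}^{n−1} (pᵢ−mqᵢ)(p_{i+1}−mq_{i+1})Φ(x_{i+1}−xᵢ) + m(p_{k−1}−mq_{k−1})Φ(x̄_q − x_{k−1}) + m(p_k−mq_k)Φ(x_k − x̄_q). -/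

import Mathlib

/-!
Insert the `q`-barycenter `x̄_q` into `x` at position `k` with weight `m`, and give the other
points the weights `pᵢ - m qᵢ`, which are nonnegative because `m = min pᵢ / qᵢ`. These `n + 1`
weights sum to `1` and have the same barycenter as `p`, so the Jensen gap of the augmented tuple is
`Jₙ(f, x, p) - m Jₙ(f, x, q)`. The Song–Yang inequality for the augmented (still sorted) tuple
is the claim: its two gaps next to `x̄_q` give the terms with `Φ (x̄_q - x_{k-1})` and
`Φ (x_k - x̄_q)`.

The Song–Yang inequality is proved by induction, merging all points but the last into their
barycenter and applying uniform convexity to that barycenter and the last point.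
-/

open Finset

def insertAt {α : Type*} (k : ℕ) (c : α) (x : ℕ → α) (i : ℕ) : α :=
  if i < k then x i else if i = k then c else x (i - 1)

namespace insertAt

variable {α β : Type*} {k n : ℕ} {c : α} {x : ℕ → α} {i : ℕ}

lemma of_lt (h : i < k) : insertAt k c x i = x i := if_pos h

lemma self : insertAt k c x k = c := by simp [insertAt]

lemma of_gt (h : k < i) : insertAt k c x i = x (i - 1) := by
  rw [insertAt, if_neg (by omega), if_neg (by omega)]

lemma map₂ {γ δ : Type*} (F : α → γ → δ) (d : γ) (u : ℕ → γ) (i : ℕ) :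
    F (insertAt k c x i) (insertAt k d u i) = insertAt k (F c d) (fun j => F (x j) (u j)) i := by
  unfold insertAt; split_ifs <;> rfl

lemma mem {S : Set α} (hk₁ : 1 ≤ k) (hk : k ≤ n + 1) (hx : ∀ i ∈ Icc 1 n, x i ∈ S) (hc : c ∈ S) :
    ∀ i ∈ Icc 1 (n + 1), insertAt k c x i ∈ S := by
  intro i hi
  rw [mem_Icc] at hi
  unfold insertAt
  split_ifs with h₁ h₂
  · exact hx i (mem_Icc.2 ⟨hi.1, by omega⟩)
  · exact hc
  · exact hx (i - 1) (mem_Icc.2 ⟨by omega, by omega⟩)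

lemma monotoneOn [Preorder α] (hk₁ : 1 ≤ k) (hk : k ≤ n + 1) (hx : MonotoneOn x (Set.Icc 1 n))
    (hleft : x (k - 1) ≤ c) (hright : c ≤ x k) :
    MonotoneOn (insertAt k c x) (Set.Icc 1 (n + 1)) := by
  intro i hi j hj hij
  simp only [Set.mem_Icc] at hi hj
  have below : ∀ i, 1 ≤ i → i < k → x i ≤ c := fun i h₁ h₂ =>
    (hx ⟨h₁, by omega⟩ ⟨by omega, by omega⟩ (by omega)).trans hleft
  have above : ∀ j, k < j → j ≤ n + 1 → c ≤ x (j - 1) := fun j h₁ h₂ =>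
    hright.trans (hx ⟨hk₁, by omega⟩ ⟨by omega, by omega⟩ (by omega))
  unfold insertAt
  split_ifs <;> first
    | exact hx ⟨by omega, by omega⟩ ⟨by omega, by omega⟩ (by omega)
    | exact below i (by omega) (by omega)
    | exact above j (by omega) (by omega)
    | exact (below i (by omega) (by omega)).trans (above j (by omega) (by omega))
    | exact le_rfl
    | omega

lemma sum_Icc [AddCommMonoid α] (hk₁ : 1 ≤ k) (hk : k ≤ n + 1) :
    ∑ i ∈ Icc 1 (n + 1), insertAt k c x i = ∑ i ∈ Icc 1 n, x i + c := by
  induction n, (show k - 1 ≤ n by omega) using Nat.le_induction with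
  | base =>
    rw [sum_Icc_succ_top (by omega), Nat.sub_add_cancel hk₁, self]
    congr 1
    exact sum_congr rfl fun i hi => of_lt (by grind)
  | succ n hn ih =>
    rw [sum_Icc_succ_top (by omega), ih (by omega), of_gt (by omega), sum_Icc_succ_top (by omega),
      Nat.add_sub_cancel, add_right_comm]

lemma sum_Icc_adjacent [AddCommMonoid β] (H : α → α → β) (hk : 2 ≤ k) (hkn : k ≤ n) :
    ∑ i ∈ Icc 1 n, H (insertAt k c x i) (insertAt k c x (i + 1)) + H (x (k - 1)) (x k) =
      ∑ i ∈ Icc 1 (n - 1), H (x i) (x (i + 1)) + H (x (k - 1)) c + H c (x k) := by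
  induction n, hkn using Nat.le_induction with
  | base =>
    obtain ⟨j, rfl⟩ : ∃ j, k = j + 2 := ⟨k - 2, by omega⟩
    have hlow : ∑ i ∈ Icc 1 j, H (insertAt (j + 2) c x i) (insertAt (j + 2) c x (i + 1)) =
        ∑ i ∈ Icc 1 j, H (x i) (x (i + 1)) :=
      sum_congr rfl fun i hi => by rw [of_lt (by grind), of_lt (by grind)]
    rw [sum_Icc_succ_top (by omega), sum_Icc_succ_top (by omega), hlow, of_lt (by omega), self,
      of_gt (by omega), Nat.add_sub_cancel, show j + 2 - 1 = j + 1 by omega,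
      sum_Icc_succ_top (by omega)]
    abel
  | succ n hn ih =>
    obtain ⟨n, rfl⟩ : ∃ n', n = n' + 1 := ⟨n - 1, by omega⟩
    rw [sum_Icc_succ_top (by omega), add_right_comm, ih, of_gt (by omega), of_gt (by omega)]
    simp only [Nat.add_sub_cancel]
    rw [sum_Icc_succ_top (by omega)]
    abel

end insertAt

noncomputable def jensenGap (n : ℕ) (f : ℝ → ℝ) (x w : ℕ → ℝ) : ℝ :=
  ∑ i ∈ Icc 1 n, w i * f (x i) - f (∑ i ∈ Icc 1 n, w i * x i)

lemma jensenGap_succ_eq (f : ℝ → ℝ) {M : ℕ} (y w : ℕ → ℝ) {s : ℝ} (hs : s ≠ 0) :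
    jensenGap (M + 1) f y w = s * jensenGap M f y (fun i => w i / s) +
      (s * f (∑ i ∈ Icc 1 M, w i / s * y i) + w (M + 1) * f (y (M + 1)) -
        f (s * ∑ i ∈ Icc 1 M, w i / s * y i + w (M + 1) * y (M + 1))) := by
  have hscale : ∀ g : ℕ → ℝ, s * ∑ i ∈ Icc 1 M, w i / s * g i = ∑ i ∈ Icc 1 M, w i * g i :=
    fun g => by rw [mul_sum]; exact sum_congr rfl fun i _ => by field_simp
  simp only [jensenGap, sum_Icc_succ_top (show 1 ≤ M + 1 by omega), mul_sub, hscale]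
  ring

lemma jensenGap_succ_of_sum_Icc_eq_zero (f : ℝ → ℝ) {M : ℕ} (y : ℕ → ℝ) {w : ℕ → ℝ}
    (hw : ∀ i ∈ Icc 1 M, w i = 0) (hw1 : ∑ i ∈ Icc 1 (M + 1), w i = 1) :
    jensenGap (M + 1) f y w = 0 := by
  have hlast : w (M + 1) = 1 := by
    rwa [sum_Icc_succ_top (by omega), sum_eq_zero hw, zero_add] at hw1
  rw [jensenGap, sum_Icc_succ_top (by omega), sum_Icc_succ_top (by omega),
    sum_eq_zero fun i hi => by simp [hw i hi], sum_eq_zero fun i hi => by simp [hw i hi], hlast]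
  simp

lemma sum_mul_mem_Icc_of_monotoneOn {M : ℕ} (hM : 1 ≤ M) {y w : ℕ → ℝ}
    (hy : MonotoneOn y (Set.Icc 1 M)) (hw : ∀ i ∈ Icc 1 M, 0 ≤ w i) (hw1 : ∑ i ∈ Icc 1 M, w i = 1) :
    ∑ i ∈ Icc 1 M, w i * y i ∈ Set.Icc (y 1) (y M) := by
  have hbounds : ∀ i ∈ Icc 1 M, y i ∈ Set.Icc (y 1) (y M) := fun i hi =>
    have hi' : i ∈ Set.Icc 1 M := by simpa using hi
    ⟨hy ⟨le_rfl, hM⟩ hi' hi'.1, hy hi' ⟨hM, le_rfl⟩ hi'.2⟩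
  simpa only [smul_eq_mul] using (convex_Icc (y 1) (y M)).sum_mem hw hw1 hbounds

lemma sum_le_mul_sum_div_mul_div {ι : Type*} (I : Finset ι) {s : ℝ} (hs₀ : 0 < s) (hs₁ : s ≤ 1)
    (u v g : ι → ℝ) (hnonneg : ∀ i ∈ I, 0 ≤ u i * v i * g i) :
    ∑ i ∈ I, u i * v i * g i ≤ s * ∑ i ∈ I, u i / s * (v i / s) * g i := by
  have hscale : s * ∑ i ∈ I, u i / s * (v i / s) * g i = (∑ i ∈ I, u i * v i * g i) / s := by
    rw [mul_sum, sum_div]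
    exact sum_congr rfl fun i _ => by field_simp
  rw [hscale]
  exact le_div_self (sum_nonneg hnonneg) hs₀ hs₁

section SongYang

variable {a b : ℝ} {f Φ : ℝ → ℝ}

lemma uniformConvexOn_of_forall_mem_Icc {s : Set ℝ} (hs : Convex ℝ s)
    (h : ∀ x ∈ s, ∀ y ∈ s, ∀ t ∈ Set.Icc (0 : ℝ) 1,
      t * f x + (1 - t) * f y ≥ f (t * x + (1 - t) * y) + t * (1 - t) * Φ |x - y|) :
    UniformConvexOn s Φ f := by
  refine ⟨hs, fun x hx y hy t u ht hu htu => ?_⟩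
  obtain rfl : u = 1 - t := by linarith
  have := h x hx y hy t ⟨ht, by linarith⟩
  simp only [smul_eq_mul, Real.norm_eq_abs]
  linarith

lemma sub_mem_Ico_sub_of_le {u v : ℝ} (hu : u ∈ Set.Ico a b) (hv : v ∈ Set.Ico a b) (huv : u ≤ v) :
    v - u ∈ Set.Ico 0 (b - a) :=
  ⟨sub_nonneg.2 huv, by linarith [hu.1, hv.2]⟩

/- The inductive step of the Song–Yang inequality: `z` is the barycenter of the first points,
`u` the last of them and `v` the new point. -/
lemma mul_mul_le_two_point_gap (hf : UniformConvexOn (Set.Ico a b) Φ f)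
    (hΦpos : ∀ t ∈ Set.Ico 0 (b - a), 0 ≤ Φ t) (hΦmono : MonotoneOn Φ (Set.Ico 0 (b - a)))
    {z u v : ℝ} (hz : z ∈ Set.Ico a b) (hu : u ∈ Set.Ico a b) (hv : v ∈ Set.Ico a b)
    (hzu : z ≤ u) (huv : u ≤ v) {r s t : ℝ} (hr : 0 ≤ r) (hrs : r ≤ s) (ht : 0 ≤ t)
    (hst : s + t = 1) :
    r * t * Φ (v - u) ≤ s * f z + t * f v - f (s * z + t * v) := by
  have hconv := hf.2 hz hv (hr.trans hrs) ht hst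
  rw [Real.norm_eq_abs, abs_sub_comm, abs_of_nonneg (by linarith)] at hconv
  simp only [smul_eq_mul] at hconv
  have hvu := sub_mem_Ico_sub_of_le hu hv huv
  have hmono : r * t * Φ (v - u) ≤ s * t * Φ (v - z) :=
    mul_le_mul (by gcongr) (hΦmono hvu (sub_mem_Ico_sub_of_le hz hv (hzu.trans huv)) (by linarith))
      (hΦpos _ hvu) (mul_nonneg (hr.trans hrs) ht)
  linarith

theorem jensenGap_ge_sum_adjacent (hf : UniformConvexOn (Set.Ico a b) Φ f)
    (hΦpos : ∀ t ∈ Set.Ico 0 (b - a), 0 ≤ Φ t) (hΦmono : MonotoneOn Φ (Set.Ico 0 (b - a)))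
    {N : ℕ} {y w : ℕ → ℝ} (hy : ∀ i ∈ Icc 1 N, y i ∈ Set.Ico a b)
    (hy_mono : MonotoneOn y (Set.Icc 1 N)) (hw : ∀ i ∈ Icc 1 N, 0 ≤ w i)
    (hw1 : ∑ i ∈ Icc 1 N, w i = 1) :
    ∑ i ∈ Icc 1 (N - 1), w i * w (i + 1) * Φ (y (i + 1) - y i) ≤ jensenGap N f y w := by
  induction N generalizing w with
  | zero => simp at hw1
  | succ M ih =>
    have hwM : ∀ i ∈ Icc 1 M, 0 ≤ w i := fun i hi => hw i (Icc_subset_Icc_right (by omega) hi)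
    rcases (sum_nonneg hwM).eq_or_lt with hs₀ | hs₀
    · have hzero := (sum_eq_zero_iff_of_nonneg hwM).1 hs₀.symm
      rw [jensenGap_succ_of_sum_Icc_eq_zero f y hzero hw1, Nat.add_sub_cancel]
      exact (sum_eq_zero fun i hi => by simp [hzero i hi]).le
    set s := ∑ i ∈ Icc 1 M, w i
    have hM : 1 ≤ M := Nat.one_le_iff_ne_zero.2 fun h => by simp [s, h] at hs₀
    have hst : s + w (M + 1) = 1 := by rw [← hw1, sum_Icc_succ_top (by omega)]
    have hw' : ∀ i ∈ Icc 1 M, 0 ≤ w i / s := fun i hi => div_nonneg (hwM i hi) hs₀.le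
    have hw'1 : ∑ i ∈ Icc 1 M, w i / s = 1 := by rw [← sum_div, div_self hs₀.ne']
    have hmonoM : MonotoneOn y (Set.Icc 1 M) := hy_mono.mono (Set.Icc_subset_Icc_right (by omega))
    have hz := sum_mul_mem_Icc_of_monotoneOn hM hmonoM hw' hw'1
    have hyM := hy M (by simp [hM])
    have hlast := mul_mul_le_two_point_gap hf hΦpos hΦmono
      ⟨(hy 1 (by simp)).1.trans hz.1, hz.2.trans_lt hyM.2⟩ hyM (hy (M + 1) (by simp)) hz.2
      (hy_mono ⟨hM, by omega⟩ ⟨by omega, le_rfl⟩ (by omega)) (hwM M (by simp [hM]))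
      (single_le_sum hwM (by simp [hM])) (hw (M + 1) (by simp)) hst
    have hinner := sum_le_mul_sum_div_mul_div (Icc 1 (M - 1)) hs₀
      (by linarith [hw (M + 1) (by simp)]) w (fun i => w (i + 1)) (fun i => Φ (y (i + 1) - y i))
      fun i hi => by
        have hi : i ∈ Icc 1 (M + 1) ∧ i + 1 ∈ Icc 1 (M + 1) := by simp only [mem_Icc] at hi ⊢; omega
        exact mul_nonneg (mul_nonneg (hw i hi.1) (hw _ hi.2)) (hΦpos _ (sub_mem_Ico_sub_of_le
          (hy i hi.1) (hy _ hi.2) (hy_mono (by simpa using hi.1) (by simpa using hi.2) (by omega))))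
    have hIH := mul_le_mul_of_nonneg_left
      (ih (fun i hi => hy i (Icc_subset_Icc_right (by omega) hi)) hmonoM hw' hw'1) hs₀.le
    rw [jensenGap_succ_eq f y w hs₀.ne', Nat.add_sub_cancel, ← Nat.sub_add_cancel hM,
      sum_Icc_succ_top (by omega), Nat.sub_add_cancel hM]
    linarith

end SongYang

lemma jensenGap_insertAt (f : ℝ → ℝ) {n k : ℕ} (hk₁ : 1 ≤ k) (hk : k ≤ n + 1) (x p q : ℕ → ℝ)
    (m : ℝ) :
    jensenGap (n + 1) f (insertAt k (∑ i ∈ Icc 1 n, q i * x i) x)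
      (insertAt k m fun i => p i - m * q i) = jensenGap n f x p - m * jensenGap n f x q := by
  have hsplit : ∀ g : ℝ → ℝ, ∑ i ∈ Icc 1 (n + 1),
      insertAt k m (fun i => p i - m * q i) i * g (insertAt k (∑ i ∈ Icc 1 n, q i * x i) x i) =
        ∑ i ∈ Icc 1 n, p i * g (x i) - m * ∑ i ∈ Icc 1 n, q i * g (x i) +
          m * g (∑ i ∈ Icc 1 n, q i * x i) := by
    intro g
    simp only [insertAt.map₂ (fun r t => r * g t), insertAt.sum_Icc hk₁ hk, mul_sum,
      ← sum_sub_distrib, sub_mul, mul_assoc]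
  have hmean := hsplit id
  simp only [id, sub_add_cancel] at hmean
  rw [jensenGap, jensenGap, jensenGap, hsplit f, hmean]
  ring

theorem stmt15_general {a b : ℝ} {f Φ : ℝ → ℝ}
    (hΦpos : ∀ t ∈ Set.Ico 0 (b - a), 0 ≤ Φ t)
    (hΦmono : MonotoneOn Φ (Set.Ico 0 (b - a)))
    (huc : ∀ x ∈ Set.Ico a b, ∀ y ∈ Set.Ico a b, ∀ t ∈ Set.Icc (0 : ℝ) 1,
      t * f x + (1 - t) * f y ≥ f (t * x + (1 - t) * y) + t * (1 - t) * Φ |x - y|)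
    {n : ℕ} (x : ℕ → ℝ) (hx : ∀ i ∈ Finset.Icc 1 n, x i ∈ Set.Ico a b)
    (hmono : ∀ i j, 1 ≤ i → i ≤ j → j ≤ n → x i ≤ x j)
    (p q : ℕ → ℝ) (hp : ∀ i ∈ Finset.Icc 1 n, 0 ≤ p i)
    (hq : ∀ i ∈ Finset.Icc 1 n, 0 < q i)
    (hp1 : ∑ i ∈ Finset.Icc 1 n, p i = 1) (hq1 : ∑ i ∈ Finset.Icc 1 n, q i = 1)
    (m : ℝ) (hm : IsLeast {r | ∃ i ∈ Finset.Icc 1 n, r = p i / q i} m)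
    (k : ℕ) (hk2 : 2 ≤ k) (hkn : k ≤ n)
    (hleft : x (k - 1) ≤ ∑ i ∈ Finset.Icc 1 n, q i * x i)
    (hright : ∑ i ∈ Finset.Icc 1 n, q i * x i ≤ x k) :
    (∑ i ∈ Finset.Icc 1 n, p i * f (x i) - f (∑ i ∈ Finset.Icc 1 n, p i * x i)) -
      m * (∑ i ∈ Finset.Icc 1 n, q i * f (x i) - f (∑ i ∈ Finset.Icc 1 n, q i * x i)) ≥
    (∑ i ∈ (Finset.Icc 1 (n - 1)).erase (k - 1),
        (p i - m * q i) * (p (i + 1) - m * q (i + 1)) * Φ (x (i + 1) - x i)) +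
      m * (p (k - 1) - m * q (k - 1)) *
        Φ ((∑ i ∈ Finset.Icc 1 n, q i * x i) - x (k - 1)) +
      m * (p k - m * q k) * Φ (x k - ∑ i ∈ Finset.Icc 1 n, q i * x i) := by
  have hf := uniformConvexOn_of_forall_mem_Icc (convex_Ico a b) huc
  set c := ∑ i ∈ Icc 1 n, q i * x i with hc_def
  obtain ⟨⟨i₀, hi₀, hm_eq⟩, hm_le⟩ := hm
  have hm₀ : 0 ≤ m := hm_eq ▸ div_nonneg (hp i₀ hi₀) (hq i₀ hi₀).le
  have hv : ∀ i ∈ Icc 1 n, 0 ≤ p i - m * q i := fun i hi =>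
    sub_nonneg.2 ((le_div_iff₀ (hq i hi)).1 (hm_le ⟨i, hi, rfl⟩))
  have hv1 : ∑ i ∈ Icc 1 n, (p i - m * q i) = 1 - m := by
    rw [sum_sub_distrib, ← mul_sum, hp1, hq1, mul_one]
  -- the augmented weights and points, inserted together as pairs
  have hgaps := insertAt.sum_Icc_adjacent (fun P Q : ℝ × ℝ => P.1 * Q.1 * Φ (Q.2 - P.2))
    (c := (m, c)) (x := fun i => (p i - m * q i, x i)) hk2 hkn
  simp only [← insertAt.map₂ Prod.mk] at hgaps
  rw [← sum_erase_add _ _ (show k - 1 ∈ Icc 1 (n - 1) by simp; omega),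
    Nat.sub_add_cancel (by omega : 1 ≤ k)] at hgaps
  have hc : c ∈ Set.Ico a b :=
    ⟨(hx (k - 1) (by simp; omega)).1.trans hleft, hright.trans_lt (hx k (by simp; omega)).2⟩
  have hSY := jensenGap_ge_sum_adjacent hf hΦpos hΦmono (N := n + 1) (y := insertAt k c x)
    (w := insertAt k m fun i => p i - m * q i)
    (insertAt.mem (by omega) (by omega) hx hc)
    (insertAt.monotoneOn (by omega) (by omega) (fun i hi j hj hij => hmono i j hi.1 hij hj.2)
      hleft hright)
    (insertAt.mem (S := Set.Ici 0) (c := m) (x := fun i => p i - m * q i) (by omega) (by omega)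
      hv hm₀)
    (by rw [insertAt.sum_Icc (by omega) (by omega), hv1]; ring)
  rw [jensenGap_insertAt f (by omega) (by omega), Nat.add_sub_cancel] at hSY
  simp only [jensenGap, ← hc_def] at hSY
  linarith

theorem stmt15 {a b : ℝ} (hab : a < b) {f Φ : ℝ → ℝ}
    (hΦ0 : Φ 0 = 0) (hΦpos : ∀ t ∈ Set.Ico 0 (b - a), 0 ≤ Φ t)
    (hΦmono : MonotoneOn Φ (Set.Ico 0 (b - a)))
    (huc : ∀ x ∈ Set.Ico a b, ∀ y ∈ Set.Ico a b, ∀ t ∈ Set.Icc (0 : ℝ) 1,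
      t * f x + (1 - t) * f y ≥ f (t * x + (1 - t) * y) + t * (1 - t) * Φ |x - y|)
    {n : ℕ} (hn : 0 < n) (x : ℕ → ℝ) (hx : ∀ i ∈ Finset.Icc 1 n, x i ∈ Set.Ico a b)
    (hmono : ∀ i j, 1 ≤ i → i ≤ j → j ≤ n → x i ≤ x j)
    (p q : ℕ → ℝ) (hp : ∀ i ∈ Finset.Icc 1 n, 0 ≤ p i)
    (hq : ∀ i ∈ Finset.Icc 1 n, 0 < q i)
    (hp1 : ∑ i ∈ Finset.Icc 1 n, p i = 1) (hq1 : ∑ i ∈ Finset.Icc 1 n, q i = 1)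
    (m : ℝ) (hm : IsLeast {r | ∃ i ∈ Finset.Icc 1 n, r = p i / q i} m)
    (k : ℕ) (hk2 : 2 ≤ k) (hkn : k ≤ n)
    (hleft : x (k - 1) ≤ ∑ i ∈ Finset.Icc 1 n, q i * x i)
    (hright : ∑ i ∈ Finset.Icc 1 n, q i * x i ≤ x k) :
    (∑ i ∈ Finset.Icc 1 n, p i * f (x i) - f (∑ i ∈ Finset.Icc 1 n, p i * x i)) -
      m * (∑ i ∈ Finset.Icc 1 n, q i * f (x i) - f (∑ i ∈ Finset.Icc 1 n, q i * x i)) ≥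
    (∑ i ∈ (Finset.Icc 1 (n - 1)).erase (k - 1),
        (p i - m * q i) * (p (i + 1) - m * q (i + 1)) * Φ (x (i + 1) - x i)) +
      m * (p (k - 1) - m * q (k - 1)) *
        Φ ((∑ i ∈ Finset.Icc 1 n, q i * x i) - x (k - 1)) +
      m * (p k - m * q k) * Φ (x k - ∑ i ∈ Finset.Icc 1 n, q i * x i) :=
  stmt15_general hΦpos hΦmono huc x hx hmono p q hp hq hp1 hq1 m hm k hk2 hkn hleft hright
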